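/- arXiv:2402.07699 — 4 statements merged into one kernel-verified Lean document; each statement's English description precedes it below -/
import Mathlib

section
/- Let σ be a continuous coercive bilinear form on a real Hilbert space H with coercivity constant α and continuity constant β, let C be a nonempty closed convex subset, g ∈ H, and let Λ be the operator with σ(u,v) = ⟨Λu, v⟩. Set γ = α/β². Then the map T : C → C defined by T(v) = P_C(γ g − γ Λv + v), where P_C is the metric projection onto C, is a strict contraction with Lipschitz constant √(1 − 2γα + γ²β²) < 1. -/
open RealInnerProductSpace

theorem stmt_4
    {H : Type*} [NormedAddCommGroup H] [InnerProductSpace ℝ H] [CompleteSpace H]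
    (σ : H →ₗ[ℝ] H →ₗ[ℝ] ℝ) (α β : ℝ) (hα : 0 < α) (hβ : 0 < β)
    (hcont : ∀ u v : H, |σ u v| ≤ β * ‖u‖ * ‖v‖)
    (hcoer : ∀ v : H, σ v v ≥ α * ‖v‖ ^ 2)
    (C : Set H) (hC : C.Nonempty) (hCc : IsClosed C) (hCv : Convex ℝ C)
    (PC : H → H) (hPCmem : ∀ x : H, PC x ∈ C)
    (hPCproj : ∀ x : H, ∀ y ∈ C, ‖x - PC x‖ ≤ ‖x - y‖)
    (g : H)
    (Λ : H →L[ℝ] H) (hΛ : ∀ u v : H, σ u v = ⟪Λ u, v⟫)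
    (γ : ℝ) (hγ : γ = α / β ^ 2)
    (T : H → H) (hT : ∀ v : H, T v = PC (γ • g - γ • Λ v + v)) :
    Real.sqrt (1 - 2 * γ * α + γ ^ 2 * β ^ 2) < 1 ∧
      ∀ v₁ ∈ C, ∀ v₂ ∈ C,
        ‖T v₁ - T v₂‖ ≤ Real.sqrt (1 - 2 * γ * α + γ ^ 2 * β ^ 2) * ‖v₁ - v₂‖ := by
  have hγpos : 0 < γ := by rw [hγ]; positivity
  set k2 : ℝ := 1 - 2 * γ * α + γ ^ 2 * β ^ 2 with hk2
  have hβ2 : (0:ℝ) < β ^ 2 := by positivity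
  have hk2lt : k2 < 1 := by
    have hk2eq : k2 = 1 - α ^ 2 / β ^ 2 := by
      rw [hk2, hγ]; field_simp; ring
    rw [hk2eq]
    have : 0 < α ^ 2 / β ^ 2 := by positivity
    linarith
  -- variational inequality for the projection
  have hvar : ∀ x : H, ∀ y ∈ C, ⟪x - PC x, y - PC x⟫ ≤ 0 := by
    intro x y hy
    have hinf : ‖x - PC x‖ = ⨅ w : C, ‖x - w‖ := by
      have hne : Nonempty C := ⟨⟨PC x, hPCmem x⟩⟩
      apply le_antisymm
      · exact le_ciInf fun w => hPCproj x w w.2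
      · exact ciInf_le (f := fun w : C => ‖x - (w : H)‖)
          ⟨0, by rintro r ⟨w, rfl⟩; positivity⟩ ⟨PC x, hPCmem x⟩
    exact (norm_eq_iInf_iff_real_inner_le_zero hCv (hPCmem x)).1 hinf y hy
  -- projection is nonexpansive
  have hne : ∀ a b : H, ‖PC a - PC b‖ ≤ ‖a - b‖ := by
    intro a b
    set p := PC a
    set q := PC b
    have h1 := hvar a q (hPCmem b)
    have h2 := hvar b p (hPCmem a)
    have e1 : ⟪a - b, p - q⟫ - ‖p - q‖ ^ 2 =
        -⟪a - p, q - p⟫ - ⟪b - q, p - q⟫ := by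
      rw [← real_inner_self_eq_norm_sq]
      simp only [inner_sub_left, inner_sub_right]
      ring
    have key : ‖p - q‖ ^ 2 ≤ ⟪a - b, p - q⟫ := by linarith
    have hcs : ⟪a - b, p - q⟫ ≤ ‖a - b‖ * ‖p - q‖ := real_inner_le_norm _ _
    rcases eq_or_lt_of_le (norm_nonneg (p - q)) with h0 | h0
    · nlinarith [norm_nonneg (a - b)]
    · nlinarith
  -- bound on Λ
  have hΛbound : ∀ w : H, ‖Λ w‖ ≤ β * ‖w‖ := by
    intro w
    have hsq : ‖Λ w‖ ^ 2 = σ w (Λ w) := by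
      rw [hΛ, real_inner_self_eq_norm_sq]
    have h := hcont w (Λ w)
    have habs := le_abs_self (σ w (Λ w))
    by_cases h0 : ‖Λ w‖ = 0
    · rw [h0]; positivity
    · have hpos : 0 < ‖Λ w‖ := lt_of_le_of_ne (norm_nonneg _) (Ne.symm h0)
      nlinarith
  -- key contraction estimate
  have hkey : ∀ w : H, ‖w - γ • Λ w‖ ^ 2 ≤ k2 * ‖w‖ ^ 2 := by
    intro w
    have e : ‖w - γ • Λ w‖ ^ 2 =
        ‖w‖ ^ 2 - 2 * γ * ⟪Λ w, w⟫ + γ ^ 2 * ‖Λ w‖ ^ 2 := by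
      rw [norm_sub_sq_real, real_inner_smul_right, real_inner_comm, norm_smul]
      rw [Real.norm_eq_abs, abs_of_pos hγpos]
      ring
    have hc : σ w w ≥ α * ‖w‖ ^ 2 := hcoer w
    have hcw : ⟪Λ w, w⟫ ≥ α * ‖w‖ ^ 2 := by rw [← hΛ]; exact hc
    have hb := hΛbound w
    have hbn : 0 ≤ ‖Λ w‖ := norm_nonneg _
    have hwn : 0 ≤ ‖w‖ := norm_nonneg _
    rw [e, hk2]
    nlinarith [mul_nonneg hγpos.le (sub_nonneg.2 hcw), sq_nonneg γ,
      mul_nonneg (mul_nonneg (sq_nonneg γ) (sub_nonneg.2 hb)) (add_nonneg (mul_nonneg hβ.le hwn) hbn)]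
  constructor
  · exact (Real.sqrt_lt' one_pos).2 (by rw [one_pow]; exact hk2lt)
  · intro v₁ h₁ v₂ h₂
    rw [hT v₁, hT v₂]
    have e : (γ • g - γ • Λ v₁ + v₁) - (γ • g - γ • Λ v₂ + v₂) =
        (v₁ - v₂) - γ • Λ (v₁ - v₂) := by
      rw [map_sub, smul_sub]; abel
    calc ‖PC (γ • g - γ • Λ v₁ + v₁) - PC (γ • g - γ • Λ v₂ + v₂)‖
        ≤ ‖(γ • g - γ • Λ v₁ + v₁) - (γ • g - γ • Λ v₂ + v₂)‖ := hne _ _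
      _ = ‖(v₁ - v₂) - γ • Λ (v₁ - v₂)‖ := by rw [e]
      _ = Real.sqrt (‖(v₁ - v₂) - γ • Λ (v₁ - v₂)‖ ^ 2) :=
          (Real.sqrt_sq (norm_nonneg _)).symm
      _ ≤ Real.sqrt (k2 * ‖v₁ - v₂‖ ^ 2) := Real.sqrt_le_sqrt (hkey _)
      _ = Real.sqrt k2 * ‖v₁ - v₂‖ := by
          rw [Real.sqrt_mul' _ (sq_nonneg ‖v₁ - v₂‖)]
          rw [Real.sqrt_sq (norm_nonneg _)]
end

section
/- Let T be an invertible bounded operator on H, {f_j} a K-frame, {c_j} bounded scalars, and let S be the frame operator of {c_j f_j}. Then (T f_j, c_j) is a Parseval K-frame if and only if S = (T⁻¹ K)(T⁻¹ K)*. -/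
open RealInnerProductSpace

theorem stmt_12
    {H : Type*} [NormedAddCommGroup H] [InnerProductSpace ℝ H] [CompleteSpace H]
    {ι : Type*} (F : ι → H) (c : ι → ℝ) (hc : ∃ M : ℝ, ∀ j, |c j| ≤ M)
    (K : H →L[ℝ] H) (A B : ℝ) (hA : 0 < A) (hB : 0 < B)
    (hlow : ∀ f : H, A * ‖ContinuousLinearMap.adjoint K f‖ ^ 2 ≤ ∑' j, ⟪f, F j⟫ ^ 2)
    (hup : ∀ f : H, ∑' j, ⟪f, F j⟫ ^ 2 ≤ B * ‖f‖ ^ 2)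
    (T : H ≃L[ℝ] H)
    (S : H →L[ℝ] H)
    (hS : ∀ f : H, S f = ∑' j, ⟪f, c j • F j⟫ • (c j • F j)) :
    (∀ f : H, ∑' j, ⟪f, c j • T (F j)⟫ • (c j • T (F j)) =
        K (ContinuousLinearMap.adjoint K f)) ↔
      S = ((T.symm : H →L[ℝ] H) ∘L K) ∘L
        ContinuousLinearMap.adjoint ((T.symm : H →L[ℝ] H) ∘L K) := by
  set T' : H →L[ℝ] H := (T : H →L[ℝ] H)
  set Ts : H →L[ℝ] H := (T.symm : H →L[ℝ] H)
  have hTsT : Ts ∘L T' = ContinuousLinearMap.id ℝ H := by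
    ext x; simp [T', Ts]
  have hTTs : T' ∘L Ts = ContinuousLinearMap.id ℝ H := by
    ext x; simp [T', Ts]
  have key : ∀ f : H, ∑' j, ⟪f, c j • T (F j)⟫ • (c j • T (F j)) =
      T (S ((ContinuousLinearMap.adjoint T') f)) := by
    intro f
    rw [hS]
    rw [T.map_tsum]
    congr 1
    funext j
    rw [map_smul, map_smul]
    congr 1
    · rw [real_inner_smul_right, real_inner_smul_right,
        ContinuousLinearMap.adjoint_inner_left]
      rfl
  set Q : H →L[ℝ] H := (Ts ∘L K) ∘L ContinuousLinearMap.adjoint (Ts ∘L K)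
  have hQ : T' ∘L (Q ∘L ContinuousLinearMap.adjoint T') = K ∘L ContinuousLinearMap.adjoint K := by
    have h1 : ContinuousLinearMap.adjoint (Ts ∘L K) =
        ContinuousLinearMap.adjoint K ∘L ContinuousLinearMap.adjoint Ts :=
      ContinuousLinearMap.adjoint_comp Ts K
    have h2 : ContinuousLinearMap.adjoint Ts ∘L ContinuousLinearMap.adjoint T' =
        ContinuousLinearMap.id ℝ H := by
      rw [← ContinuousLinearMap.adjoint_comp, hTTs, ContinuousLinearMap.adjoint_id]
    calc T' ∘L (Q ∘L ContinuousLinearMap.adjoint T')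
        = (T' ∘L Ts) ∘L (K ∘L ((ContinuousLinearMap.adjoint K ∘L
            ContinuousLinearMap.adjoint Ts) ∘L ContinuousLinearMap.adjoint T')) := by
          simp only [Q, h1, ContinuousLinearMap.comp_assoc]
      _ = K ∘L ContinuousLinearMap.adjoint K := by
          rw [hTTs, ContinuousLinearMap.comp_assoc, h2]
          simp
  constructor
  · intro h
    have hST : S ∘L ContinuousLinearMap.adjoint T' = Q ∘L ContinuousLinearMap.adjoint T' := by
      have : T' ∘L (S ∘L ContinuousLinearMap.adjoint T') =
          T' ∘L (Q ∘L ContinuousLinearMap.adjoint T') := by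
        rw [hQ]
        ext f
        simpa [T'] using (key f).symm.trans (h f)
      have := congrArg (fun P => Ts ∘L P) this
      simpa [← ContinuousLinearMap.comp_assoc, hTsT] using this
    have := congrArg (fun P => P ∘L ContinuousLinearMap.adjoint Ts) hST
    have h2 : ContinuousLinearMap.adjoint T' ∘L ContinuousLinearMap.adjoint Ts =
        ContinuousLinearMap.id ℝ H := by
      rw [← ContinuousLinearMap.adjoint_comp, hTsT, ContinuousLinearMap.adjoint_id]
    simpa [ContinuousLinearMap.comp_assoc, h2] using this
  · intro h f
    rw [key f, h]
    have := congrFun (congrArg (fun (P : H →L[ℝ] H) => (P : H → H)) hQ) f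
    simpa [T'] using this
end

section
/- Let {f_j}_{j=1}^n be a K-frame for ℝⁿ, P an orthogonal projection with KP = PK, X = P(ℝⁿ), Y = (I−P)(ℝⁿ). Then (f_j, P, a_j, b_j) is a piecewise scalable K-frame (i.e., Σ_j |⟨f, a_j P f_j + b_j (I−P) f_j⟩|² = ‖K* f‖² for all f ∈ ℝⁿ) if and only if (i) {a_j P f_j} is a Parseval K-frame for X and {b_j (I−P) f_j} is a Parseval K-frame for Y, and (ii) Σ_{j=1}^n a_j b_j ⟨f, P f_j⟩⟨f, (I−P) f_j⟩ = 0 for every f ∈ ℝⁿ. -/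
open RealInnerProductSpace

theorem stmt_15
    {n : ℕ} (P K : EuclideanSpace ℝ (Fin n) →L[ℝ] EuclideanSpace ℝ (Fin n))
    (hP2 : P ∘L P = P) (hPsa : ContinuousLinearMap.adjoint P = P)
    (hcomm : K ∘L P = P ∘L K)
    (F : Fin n → EuclideanSpace ℝ (Fin n)) (A B : ℝ) (hA : 0 < A) (hB : 0 < B)
    (hlow : ∀ f : EuclideanSpace ℝ (Fin n),
      A * ‖ContinuousLinearMap.adjoint K f‖ ^ 2 ≤ ∑ j, ⟪f, F j⟫ ^ 2)
    (hup : ∀ f : EuclideanSpace ℝ (Fin n), ∑ j, ⟪f, F j⟫ ^ 2 ≤ B * ‖f‖ ^ 2)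
    (a b : Fin n → ℝ) :
    (∀ f : EuclideanSpace ℝ (Fin n),
        ∑ j, ⟪f, a j • P (F j) + b j • (F j - P (F j))⟫ ^ 2 =
          ‖ContinuousLinearMap.adjoint K f‖ ^ 2) ↔
      ((∀ f : EuclideanSpace ℝ (Fin n), P f = f →
          ∑ j, ⟪f, a j • P (F j)⟫ ^ 2 = ‖ContinuousLinearMap.adjoint K f‖ ^ 2) ∧
       (∀ f : EuclideanSpace ℝ (Fin n), P f = 0 →
          ∑ j, ⟪f, b j • (F j - P (F j))⟫ ^ 2 = ‖ContinuousLinearMap.adjoint K f‖ ^ 2) ∧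
       (∀ f : EuclideanSpace ℝ (Fin n),
          ∑ j, a j * b j * ⟪f, P (F j)⟫ * ⟪f, F j - P (F j)⟫ = 0)) := by
  set K' := ContinuousLinearMap.adjoint K with hK'
  have hPP : ∀ x, P (P x) = P x := fun x => ContinuousLinearMap.ext_iff.1 hP2 x
  have hPadj : ∀ f g : EuclideanSpace ℝ (Fin n), ⟪f, P g⟫ = ⟪P f, g⟫ := by
    intro f g
    conv_rhs => rw [← hPsa]
    exact (ContinuousLinearMap.adjoint_inner_left P g f).symm
  have hPPinner : ∀ f g : EuclideanSpace ℝ (Fin n), ⟪P f, P g⟫ = ⟪f, P g⟫ := by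
    intro f g
    rw [hPadj (P f) g, hPP, ← hPadj]
  -- commutation of adjoint with P
  have hPKadj : ∀ f, P (K' f) = K' (P f) := by
    intro f
    have h := congrArg ContinuousLinearMap.adjoint hcomm
    rw [ContinuousLinearMap.adjoint_comp, ContinuousLinearMap.adjoint_comp, hPsa] at h
    have := ContinuousLinearMap.ext_iff.1 h f
    simp only [ContinuousLinearMap.comp_apply] at this
    rw [hK']
    exact this
  -- Pythagoras for K'
  have pyth : ∀ f, ‖K' f‖ ^ 2 = ‖K' (P f)‖ ^ 2 + ‖K' (f - P f)‖ ^ 2 := by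
    intro f
    have h1 : K' (P f) = P (K' f) := (hPKadj f).symm
    have h2 : K' (f - P f) = K' f - P (K' f) := by rw [map_sub, hPKadj]
    rw [h1, h2]
    set g := K' f
    have horth : ⟪P g, g - P g⟫ = 0 := by
      rw [inner_sub_right, hPPinner, real_inner_comm, sub_self]
    have := norm_add_sq_real (P g) (g - P g)
    rw [horth] at this
    have hg : P g + (g - P g) = g := by abel
    rw [hg] at this
    linarith
  -- per-term facts
  have e1 : ∀ (f : EuclideanSpace ℝ (Fin n)) j,
      ⟪P f, a j • P (F j)⟫ = a j * ⟪f, P (F j)⟫ := by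
    intro f j
    rw [real_inner_smul_right, hPadj (P f) (F j), hPP, ← hPadj]
  have e2 : ∀ (f : EuclideanSpace ℝ (Fin n)) j,
      ⟪f - P f, b j • (F j - P (F j))⟫ = b j * ⟪f, F j - P (F j)⟫ := by
    intro f j
    rw [real_inner_smul_right, inner_sub_left, inner_sub_right, inner_sub_right,
      hPPinner, hPadj f (F j)]
    ring
  -- main expansion
  have key : ∀ f : EuclideanSpace ℝ (Fin n),
      ∑ j, ⟪f, a j • P (F j) + b j • (F j - P (F j))⟫ ^ 2 =
        (∑ j, ⟪P f, a j • P (F j)⟫ ^ 2) + (∑ j, ⟪f - P f, b j • (F j - P (F j))⟫ ^ 2)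
          + 2 * ∑ j, a j * b j * ⟪f, P (F j)⟫ * ⟪f, F j - P (F j)⟫ := by
    intro f
    rw [Finset.mul_sum, ← Finset.sum_add_distrib, ← Finset.sum_add_distrib]
    apply Finset.sum_congr rfl
    intro j _
    rw [inner_add_right, real_inner_smul_right, real_inner_smul_right, e1, e2]
    ring
  constructor
  · intro H
    -- first component
    have h1 : ∀ f : EuclideanSpace ℝ (Fin n), P f = f →
        ∑ j, ⟪f, a j • P (F j)⟫ ^ 2 = ‖K' f‖ ^ 2 := by
      intro f hf
      have Hf := H f
      rw [key f, hf, sub_self] at Hf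
      have hv : ∀ j, ⟪f, F j - P (F j)⟫ = 0 := by
        intro j
        rw [inner_sub_right, hPadj f (F j), hf, sub_self]
      simp only [inner_zero_left] at Hf
      have : (∑ j, a j * b j * ⟪f, P (F j)⟫ * ⟪f, F j - P (F j)⟫) = 0 := by
        apply Finset.sum_eq_zero; intro j _; rw [hv j]; ring
      rw [this] at Hf
      simpa using Hf
    have h2 : ∀ f : EuclideanSpace ℝ (Fin n), P f = 0 →
        ∑ j, ⟪f, b j • (F j - P (F j))⟫ ^ 2 = ‖K' f‖ ^ 2 := by
      intro f hf
      have Hf := H f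
      rw [key f, hf, sub_zero] at Hf
      have hu : ∀ j, ⟪f, P (F j)⟫ = 0 := by
        intro j
        rw [hPadj f (F j), hf, inner_zero_left]
      simp only [inner_zero_left] at Hf
      have : (∑ j, a j * b j * ⟪f, P (F j)⟫ * ⟪f, F j - P (F j)⟫) = 0 := by
        apply Finset.sum_eq_zero; intro j _; rw [hu j]; ring
      rw [this] at Hf
      simpa using Hf
    refine ⟨h1, h2, ?_⟩
    intro f
    have Hf := H f
    rw [key f] at Hf
    have hg := h1 (P f) (hPP f)
    have hh : P (f - P f) = 0 := by rw [map_sub, hPP, sub_self]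
    have hh2 := h2 (f - P f) hh
    have hp := pyth f
    linarith
  · rintro ⟨h1, h2, h3⟩ f
    rw [key f]
    have hg := h1 (P f) (hPP f)
    have hh : P (f - P f) = 0 := by rw [map_sub, hPP, sub_self]
    have hh2 := h2 (f - P f) hh
    have hp := pyth f
    rw [h3 f]
    linarith
end

section
/- Let {f_j}_{j=1}^n be a K-frame for ℝⁿ, P an orthogonal projection with PK = KP, and suppose there is a nonempty proper subset I ⊂ {1,…,n} and scalars {c_j}_{j∈I}, {d_j}_{j∈Iᶜ} such that {c_j P f_j}_{j∈I} is a Parseval K-frame for X = P(ℝⁿ) and {d_j (I−P) f_j}_{j∈Iᶜ} is a Parseval K-frame for Y = (I−P)(ℝⁿ). Then defining a_j = c_j for j ∈ I, a_j = 0 for j ∈ Iᶜ, b_j = 0 for j ∈ I, b_j = d_j for j ∈ Iᶜ, the family (f_j, P, a_j, b_j)_{j=1}^n is a piecewise scalable K-frame for ℝⁿ. -/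
open RealInnerProductSpace

theorem stmt_16
    {n : ℕ} (P K : EuclideanSpace ℝ (Fin n) →L[ℝ] EuclideanSpace ℝ (Fin n))
    (hP2 : P ∘L P = P) (hPsa : ContinuousLinearMap.adjoint P = P)
    (hcomm : P ∘L K = K ∘L P)
    (F : Fin n → EuclideanSpace ℝ (Fin n)) (A B : ℝ) (hA : 0 < A) (hB : 0 < B)
    (hlow : ∀ f : EuclideanSpace ℝ (Fin n),
      A * ‖ContinuousLinearMap.adjoint K f‖ ^ 2 ≤ ∑ j, ⟪f, F j⟫ ^ 2)
    (hup : ∀ f : EuclideanSpace ℝ (Fin n), ∑ j, ⟪f, F j⟫ ^ 2 ≤ B * ‖f‖ ^ 2)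
    (I : Finset (Fin n)) (hne : I.Nonempty) (hproper : I ≠ Finset.univ)
    (c d : Fin n → ℝ)
    (hX : ∀ f : EuclideanSpace ℝ (Fin n), P f = f →
      ∑ j ∈ I, ⟪f, c j • P (F j)⟫ ^ 2 = ‖ContinuousLinearMap.adjoint K f‖ ^ 2)
    (hY : ∀ f : EuclideanSpace ℝ (Fin n), P f = 0 →
      ∑ j ∈ Iᶜ, ⟪f, d j • (F j - P (F j))⟫ ^ 2 = ‖ContinuousLinearMap.adjoint K f‖ ^ 2)
    (a b : Fin n → ℝ)
    (ha : ∀ j, a j = if j ∈ I then c j else 0)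
    (hb : ∀ j, b j = if j ∈ I then 0 else d j) :
    ∀ f : EuclideanSpace ℝ (Fin n),
      ∑ j, ⟪f, a j • P (F j) + b j • (F j - P (F j))⟫ ^ 2 =
        ‖ContinuousLinearMap.adjoint K f‖ ^ 2 := by
  intro f
  have hPP : ∀ v, P (P v) = P v := fun v => by
    have := ContinuousLinearMap.ext_iff.mp hP2 v
    simpa using this
  have hPadj : ∀ u v : EuclideanSpace ℝ (Fin n), ⟪P u, v⟫ = ⟪u, P v⟫ := by
    intro u v
    conv_lhs => rw [← hPsa]
    rw [ContinuousLinearMap.adjoint_inner_left]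
  -- inner product facts
  have hinnerP : ∀ x, ⟪f, P x⟫ = ⟪P f, P x⟫ := by
    intro x
    rw [hPadj, hPP]
  have hinnerQ : ∀ x, ⟪f, x - P x⟫ = ⟪f - P f, x - P x⟫ := by
    intro x
    have h0 : ⟪P f, x - P x⟫ = 0 := by
      rw [hPadj, map_sub, hPP, sub_self, inner_zero_right]
    rw [inner_sub_left, h0, sub_zero]
  -- split the sum
  rw [← Finset.sum_add_sum_compl I]
  have hIsum : ∑ j ∈ I, ⟪f, a j • P (F j) + b j • (F j - P (F j))⟫ ^ 2
      = ∑ j ∈ I, ⟪P f, c j • P (F j)⟫ ^ 2 := by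
    apply Finset.sum_congr rfl
    intro j hj
    rw [ha j, hb j, if_pos hj, if_pos hj, zero_smul, add_zero,
      inner_smul_right, inner_smul_right, hinnerP]
  have hIcsum : ∑ j ∈ Iᶜ, ⟪f, a j • P (F j) + b j • (F j - P (F j))⟫ ^ 2
      = ∑ j ∈ Iᶜ, ⟪f - P f, d j • (F j - P (F j))⟫ ^ 2 := by
    apply Finset.sum_congr rfl
    intro j hj
    have hj' : j ∉ I := Finset.mem_compl.mp hj
    rw [ha j, hb j, if_neg hj', if_neg hj', zero_smul, zero_add,
      inner_smul_right, inner_smul_right, hinnerQ]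
  rw [hIsum, hIcsum, hX (P f) (hPP f), hY (f - P f) (by rw [map_sub, hPP, sub_self])]
  -- commute adjoints
  have hKP : ContinuousLinearMap.adjoint K ∘L P = P ∘L ContinuousLinearMap.adjoint K := by
    have := congrArg ContinuousLinearMap.adjoint hcomm
    rwa [ContinuousLinearMap.adjoint_comp, ContinuousLinearMap.adjoint_comp, hPsa] at this
  set T := ContinuousLinearMap.adjoint K
  have h1 : T (P f) = P (T f) := ContinuousLinearMap.ext_iff.mp hKP f
  have h2 : T (f - P f) = T f - P (T f) := by rw [map_sub, h1]
  rw [h1, h2]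
  -- Pythagorean identity
  set v := T f
  have horth : ⟪P v, v - P v⟫ = 0 := by
    rw [hPadj, map_sub, hPP, sub_self, inner_zero_right]
  have := norm_add_sq_real (P v) (v - P v)
  rw [horth] at this
  simp only [add_sub_cancel] at this
  linarith [this]
end
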